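/- The rational spin Hamiltonian H_0 is obtained from the operator \bar H_0^* = −T_0^* + 2ω Σ_i x_i ∂_i + Nω(2a+1) by conjugation with the gauge factor μ(x) = e^{−ω r²/2} Π_{i=1}^N |x_i − x_{i+1}|^a, where T_0^* = Σ_i ∂_i² + 2a Σ_i (x_i − x_{i+1})^{-1}(∂_i − ∂_{i+1}) − 2a Σ_i (x_i − x_{i+1})^{-2}(1 − S_{i,i+1}). Precisely: for every smooth Σ-valued function F on C_0 and every point x ∈ C_0, H_0(μ F)(x) = μ(x) · (−(T_0^* F)(x) + 2ω Σ_i x_i ∂_i F(x) + Nω(2a+1) F(x)). -/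

import Mathlib

noncomputable section

/-- The spin space `Σ`: complex functions on `Fin N → Fin d`. -/
abbrev Spin (N d : ℕ) : Type := (Fin N → Fin d) → ℂ

/-- Partial derivative `∂_i F` of a function of `N` real variables. -/
noncomputable def pd {N : ℕ} {E : Type} [NormedAddCommGroup E] [NormedSpace ℝ E]
    (i : Fin N) (F : (Fin N → ℝ) → E) : (Fin N → ℝ) → E :=
  fun x => fderiv ℝ F x (Pi.single i 1)

/-- The spin exchange operator `S_{ij}`, transposing the `i`-th and `j`-th spin slots. -/
def Sop {N d : ℕ} (i j : Fin N) (v : Spin N d) : Spin N d :=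
  fun c => v (c ∘ Equiv.swap i j)

/-- The configuration space `C_0 = {x : x_1 < ⋯ < x_N}`. -/
def C0 (N : ℕ) : Set (Fin N → ℝ) := {x | StrictMono x}

/-- The Hamiltonian `H_0 = -∑ i ∂_i² + V_0` with
`V_0 = ω² r² + ∑ i 2a²/((x_i - x_{i-1})(x_i - x_{i+1}))
  + ∑ i 2a (x_i - x_{i+1})⁻² (a - S_{i,i+1})` (indices cyclic). -/
noncomputable def H0 {N d : ℕ} [NeZero N] (a ω : ℝ)
    (Ψ : (Fin N → ℝ) → Spin N d) : (Fin N → ℝ) → Spin N d :=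
  fun x =>
    -(∑ i : Fin N, pd i (pd i Ψ) x)
    + (ω ^ 2 * (∑ i : Fin N, (x i) ^ 2)
        + ∑ i : Fin N, 2 * a ^ 2 / ((x i - x (i - 1)) * (x i - x (i + 1)))) • Ψ x
    + ∑ i : Fin N, (2 * a / (x i - x (i + 1)) ^ 2) • (a • Ψ x - Sop i (i + 1) (Ψ x))

/-- The gauge factor `μ(x) = exp(-ω r²/2) ∏ i |x_i - x_{i+1}|^a`. -/
noncomputable def mu0 {N : ℕ} [NeZero N] (a ω : ℝ) (x : Fin N → ℝ) : ℝ :=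
  Real.exp (-(ω / 2) * ∑ i : Fin N, (x i) ^ 2) * ∏ i : Fin N, |x i - x (i + 1)| ^ a

/-- The operator `T_0^* = ∑ i ∂_i² + 2a ∑ i (x_i - x_{i+1})⁻¹ (∂_i - ∂_{i+1})
  - 2a ∑ i (x_i - x_{i+1})⁻² (1 - S_{i,i+1})`. -/
noncomputable def T0star {N d : ℕ} [NeZero N] (a : ℝ)
    (F : (Fin N → ℝ) → Spin N d) : (Fin N → ℝ) → Spin N d :=
  fun x =>
    (∑ i : Fin N, pd i (pd i F) x)
    + (2 * a) • ∑ i : Fin N, (x i - x (i + 1))⁻¹ • (pd i F x - pd (i + 1) F x)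
    - (2 * a) • ∑ i : Fin N, ((x i - x (i + 1)) ^ 2)⁻¹ • (F x - Sop i (i + 1) (F x))


variable {N : ℕ} [NeZero N]

lemma isOpen_C0 : IsOpen (C0 N) := by
  have : C0 N = ⋂ p ∈ {p : Fin N × Fin N | p.1 < p.2}, {x : Fin N → ℝ | x p.1 < x p.2} := by
    ext x
    simp only [C0, Set.mem_setOf_eq, Set.mem_iInter]
    exact ⟨fun h p hp => h hp, fun h i j hij => h (i, j) hij⟩
  rw [this]
  exact (Set.toFinite _).isOpen_biInter fun p _ =>
    isOpen_lt (continuous_apply p.1) (continuous_apply p.2)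

lemma fin_one_ne_zero (hN : 3 ≤ N) : (1 : Fin N) ≠ 0 := by
  intro h
  have h2 := congrArg Fin.val h
  have h1 : (1 : Fin N).val = 1 % N := rfl
  rw [h1, Fin.val_zero, Nat.mod_eq_of_lt (by omega : 1 < N)] at h2
  exact one_ne_zero h2

lemma fin_succ_ne (hN : 3 ≤ N) (i : Fin N) : i + 1 ≠ i := by
  intro h
  have : i + 1 = i + 0 := by rw [add_zero]; exact h
  exact fin_one_ne_zero hN (add_left_cancel this)

lemma fin_pred_ne (hN : 3 ≤ N) (i : Fin N) : i - 1 ≠ i := by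
  intro h
  apply fin_succ_ne hN i
  calc i + 1 = (i - 1) + 1 := by rw [h]
  _ = i := sub_add_cancel i 1

lemma diff_succ_ne {x : Fin N → ℝ} (hx : x ∈ C0 N) (hN : 3 ≤ N) (i : Fin N) :
    x i - x (i + 1) ≠ 0 :=
  sub_ne_zero.mpr (hx.injective.ne (fin_succ_ne hN i).symm)

lemma diff_pred_ne {x : Fin N → ℝ} (hx : x ∈ C0 N) (hN : 3 ≤ N) (i : Fin N) :
    x i - x (i - 1) ≠ 0 :=
  sub_ne_zero.mpr (hx.injective.ne (fin_pred_ne hN i).symm)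

lemma sum_shift {M : Type*} [AddCommMonoid M] (f : Fin N → M) :
    ∑ i : Fin N, f (i + 1) = ∑ i : Fin N, f i :=
  Fintype.sum_equiv (Equiv.addRight 1) _ _ (fun _ => rfl)

/-- log of the gauge factor -/
def ell (a ω : ℝ) (x : Fin N → ℝ) : ℝ :=
  -(ω / 2) * ∑ i : Fin N, (x i) ^ 2 + a * ∑ i : Fin N, Real.log (x i - x (i + 1))

/-- logarithmic gradient of the gauge factor -/
def Lf (a ω : ℝ) (i : Fin N) (x : Fin N → ℝ) : ℝ :=
  -(ω * x i) + a * ((x i - x (i + 1))⁻¹ + (x i - x (i - 1))⁻¹)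


lemma mu0_eq_exp {a ω : ℝ} {x : Fin N → ℝ} (hx : x ∈ C0 N) (hN : 3 ≤ N) :
    mu0 a ω x = Real.exp (ell a ω x) := by
  unfold mu0 ell
  rw [Real.exp_add]
  congr 1
  rw [show a * ∑ i : Fin N, Real.log (x i - x (i + 1))
      = ∑ i : Fin N, Real.log (x i - x (i + 1)) * a by rw [← Finset.sum_mul, mul_comm],
    Real.exp_sum]
  refine Finset.prod_congr rfl fun i _ => ?_
  rw [Real.rpow_def_of_pos (abs_pos.mpr (diff_succ_ne hx hN i)), Real.log_abs]

open ContinuousLinearMap in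
/-- The explicit Fréchet derivative of `ell`. -/
noncomputable def Dl (a ω : ℝ) (x : Fin N → ℝ) : (Fin N → ℝ) →L[ℝ] ℝ :=
  (-(ω / 2)) • (∑ i : Fin N, ((2 : ℝ) * x i ^ 1) • (proj i : (Fin N → ℝ) →L[ℝ] ℝ))
  + a • ∑ i : Fin N, (x i - x (i + 1))⁻¹ •
      ((proj i : (Fin N → ℝ) →L[ℝ] ℝ) - proj (i + 1))

lemma ell_hasFDerivAt {a ω : ℝ} {x : Fin N → ℝ} (hx : x ∈ C0 N) (hN : 3 ≤ N) :
    HasFDerivAt (ell a ω) (Dl a ω x) x := by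
  have h1 : HasFDerivAt (fun y : Fin N → ℝ => ∑ i : Fin N, (y i) ^ 2)
      (∑ i : Fin N, ((2 : ℝ) * x i ^ 1) • (ContinuousLinearMap.proj i : (Fin N → ℝ) →L[ℝ] ℝ)) x :=
    HasFDerivAt.fun_sum fun i _ =>
      (by have := (hasDerivAt_pow 2 (x i)).comp_hasFDerivAt x (hasFDerivAt_apply (𝕜 := ℝ) i x); exact this)
  have h2 : HasFDerivAt (fun y : Fin N → ℝ => ∑ i : Fin N, Real.log (y i - y (i + 1)))
      (∑ i : Fin N, (x i - x (i + 1))⁻¹ •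
        ((ContinuousLinearMap.proj i : (Fin N → ℝ) →L[ℝ] ℝ) - ContinuousLinearMap.proj (i + 1))) x :=
    HasFDerivAt.fun_sum fun i _ =>
      (by have := (Real.hasDerivAt_log (diff_succ_ne hx hN i)).comp_hasFDerivAt x
            ((hasFDerivAt_apply (𝕜 := ℝ) i x).sub (hasFDerivAt_apply (𝕜 := ℝ) (i + 1) x)); exact this)
  exact (h1.const_mul _).add (h2.const_mul _)

lemma Dl_apply {a ω : ℝ} {x : Fin N → ℝ} (hN : 3 ≤ N) (j : Fin N) :
    Dl a ω x (Pi.single j 1) = Lf a ω j x := by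
  unfold Dl Lf
  simp only [ContinuousLinearMap.add_apply, ContinuousLinearMap.smul_apply,
    ContinuousLinearMap.coe_sum', Finset.sum_apply, ContinuousLinearMap.sub_apply,
    ContinuousLinearMap.proj_apply, smul_eq_mul]
  have hsingle : ∀ i : Fin N, (Pi.single j (1:ℝ) : Fin N → ℝ) i = if i = j then 1 else 0 := by
    intro i; rw [Pi.single_apply]
  have e1 : ∑ i : Fin N, 2 * x i ^ 1 * (Pi.single j (1:ℝ) : Fin N → ℝ) i = 2 * x j := by
    simp only [hsingle, mul_ite, mul_one, mul_zero]
    rw [Finset.sum_ite_eq' Finset.univ j]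
    simp
  have e2 : ∑ i : Fin N, (x i - x (i + 1))⁻¹ *
      ((Pi.single j (1:ℝ) : Fin N → ℝ) i - (Pi.single j (1:ℝ) : Fin N → ℝ) (i + 1))
      = (x j - x (j + 1))⁻¹ + (x j - x (j - 1))⁻¹ := by
    simp only [hsingle, mul_sub, mul_ite, mul_one, mul_zero]
    rw [Finset.sum_sub_distrib, Finset.sum_ite_eq' Finset.univ j]
    have h3 : ∀ i : Fin N, (if i + 1 = j then (x i - x (i + 1))⁻¹ else 0)
        = (if i = j - 1 then (x i - x (i + 1))⁻¹ else 0) := fun i =>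
      if_congr eq_sub_iff_add_eq.symm rfl rfl
    rw [Finset.sum_congr rfl fun i _ => h3 i, Finset.sum_ite_eq' Finset.univ (j - 1)]
    have h4 : j - 1 + 1 = j := sub_add_cancel _ _
    simp only [Finset.mem_univ, if_true, h4]
    rw [show (x (j - 1) - x j)⁻¹ = -(x j - x (j - 1))⁻¹ by rw [← inv_neg, neg_sub]]
    ring
  rw [e1, e2]
  ring


lemma mu0_hasFDerivAt {a ω : ℝ} {x : Fin N → ℝ} (hx : x ∈ C0 N) (hN : 3 ≤ N) :
    HasFDerivAt (mu0 a ω) (mu0 a ω x • Dl a ω x) x := by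
  have h : HasFDerivAt (Real.exp ∘ ell a ω) (Real.exp (ell a ω x) • Dl a ω x) x :=
    (Real.hasDerivAt_exp (ell a ω x)).comp_hasFDerivAt x (ell_hasFDerivAt hx hN)
  rw [mu0_eq_exp hx hN]
  exact h.congr_of_eventuallyEq <|
    Filter.eventuallyEq_of_mem (isOpen_C0.mem_nhds hx) fun y hy => mu0_eq_exp hy hN

lemma mu0_diffAt {a ω : ℝ} {x : Fin N → ℝ} (hx : x ∈ C0 N) (hN : 3 ≤ N) :
    DifferentiableAt ℝ (mu0 a ω) x := (mu0_hasFDerivAt hx hN).differentiableAt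

lemma pd_mu0 {a ω : ℝ} {x : Fin N → ℝ} (hx : x ∈ C0 N) (hN : 3 ≤ N) (j : Fin N) :
    pd j (mu0 a ω) x = mu0 a ω x * Lf a ω j x := by
  unfold pd
  rw [(mu0_hasFDerivAt hx hN).fderiv, ContinuousLinearMap.smul_apply, Dl_apply hN, smul_eq_mul]

open ContinuousLinearMap in
lemma Lf_hasFDerivAt {a ω : ℝ} {x : Fin N → ℝ} (hx : x ∈ C0 N) (hN : 3 ≤ N) (i : Fin N) :
    HasFDerivAt (Lf a ω i)
      (-(ω • (proj i : (Fin N → ℝ) →L[ℝ] ℝ))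
        + a • ((-((x i - x (i + 1)) ^ 2)⁻¹) • ((proj i : (Fin N → ℝ) →L[ℝ] ℝ) - proj (i + 1))
          + (-((x i - x (i - 1)) ^ 2)⁻¹) • ((proj i : (Fin N → ℝ) →L[ℝ] ℝ) - proj (i - 1)))) x := by
  have h1 : HasFDerivAt (fun y : Fin N → ℝ => (y i - y (i + 1))⁻¹)
      ((-((x i - x (i + 1)) ^ 2)⁻¹) • ((proj i : (Fin N → ℝ) →L[ℝ] ℝ) - proj (i + 1))) x :=
    (hasDerivAt_inv (diff_succ_ne hx hN i)).comp_hasFDerivAt x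
      ((hasFDerivAt_apply i x).sub (hasFDerivAt_apply (i + 1) x))
  have h2 : HasFDerivAt (fun y : Fin N → ℝ => (y i - y (i - 1))⁻¹)
      ((-((x i - x (i - 1)) ^ 2)⁻¹) • ((proj i : (Fin N → ℝ) →L[ℝ] ℝ) - proj (i - 1))) x :=
    (hasDerivAt_inv (diff_pred_ne hx hN i)).comp_hasFDerivAt x
      ((hasFDerivAt_apply i x).sub (hasFDerivAt_apply (i - 1) x))
  exact (((hasFDerivAt_apply i x).const_mul ω).neg).add ((h1.add h2).const_mul a)

lemma pd_Lf {a ω : ℝ} {x : Fin N → ℝ} (hx : x ∈ C0 N) (hN : 3 ≤ N) (i : Fin N) :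
    pd i (Lf a ω i) x = -ω - a * (((x i - x (i + 1)) ^ 2)⁻¹ + ((x i - x (i - 1)) ^ 2)⁻¹) := by
  unfold pd
  rw [(Lf_hasFDerivAt hx hN i).fderiv]
  have hs : ∀ k : Fin N, (Pi.single i (1:ℝ) : Fin N → ℝ) k = if k = i then 1 else 0 := by
    intro k; rw [Pi.single_apply]
  simp only [ContinuousLinearMap.add_apply, ContinuousLinearMap.neg_apply,
    ContinuousLinearMap.smul_apply, ContinuousLinearMap.sub_apply,
    ContinuousLinearMap.proj_apply, smul_eq_mul, hs]
  rw [if_neg (fin_succ_ne hN i), if_neg (fin_pred_ne hN i), if_true]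
  ring


variable {E : Type} [NormedAddCommGroup E] [NormedSpace ℝ E]

lemma pd_add {A B : (Fin N → ℝ) → E} {x : Fin N → ℝ} (hA : DifferentiableAt ℝ A x)
    (hB : DifferentiableAt ℝ B x) (i : Fin N) :
    pd i (fun y => A y + B y) x = pd i A x + pd i B x := by
  unfold pd
  rw [fderiv_fun_add hA hB, ContinuousLinearMap.add_apply]

lemma pd_smul {g : (Fin N → ℝ) → ℝ} {A : (Fin N → ℝ) → E} {x : Fin N → ℝ}
    (hg : DifferentiableAt ℝ g x) (hA : DifferentiableAt ℝ A x) (i : Fin N) :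
    pd i (fun y => g y • A y) x = pd i g x • A x + g x • pd i A x := by
  unfold pd
  rw [fderiv_fun_smul hg hA]
  simp only [ContinuousLinearMap.add_apply, ContinuousLinearMap.smul_apply,
    ContinuousLinearMap.smulRight_apply]
  rw [add_comm]

lemma pd_F_diffAt {F : (Fin N → ℝ) → E} (hF : ContDiffOn ℝ (⊤ : ℕ∞) F (C0 N)) {x : Fin N → ℝ}
    (hx : x ∈ C0 N) (i : Fin N) : DifferentiableAt ℝ (pd i F) x := by
  have h1 : ContDiffAt ℝ (⊤ : ℕ∞) F x := hF.contDiffAt (isOpen_C0.mem_nhds hx)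
  have h2 : ContDiffAt ℝ (⊤ : ℕ∞) (fderiv ℝ F) x := h1.fderiv_right (by simp)
  have h3 : DifferentiableAt ℝ (fderiv ℝ F) x := h2.differentiableAt (by simp)
  exact ((ContinuousLinearMap.apply ℝ E (Pi.single i (1:ℝ))).differentiableAt).comp x h3

lemma F_diffAt {F : (Fin N → ℝ) → E} (hF : ContDiffOn ℝ (⊤ : ℕ∞) F (C0 N)) {x : Fin N → ℝ}
    (hx : x ∈ C0 N) : DifferentiableAt ℝ F x :=
  (hF.contDiffAt (isOpen_C0.mem_nhds hx)).differentiableAt (by simp)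

lemma pd_muF {a ω : ℝ} {F : (Fin N → ℝ) → E} (hF : ContDiffOn ℝ (⊤ : ℕ∞) F (C0 N))
    {x : Fin N → ℝ} (hx : x ∈ C0 N) (hN : 3 ≤ N) (i : Fin N) :
    pd i (fun y => mu0 a ω y • F y) x
      = (mu0 a ω x * Lf a ω i x) • F x + mu0 a ω x • pd i F x := by
  rw [pd_smul (mu0_diffAt hx hN) (F_diffAt hF hx) i]
  have h := pd_mu0 (a := a) (ω := ω) hx hN i
  rw [h, add_comm]

lemma pd2_muF {a ω : ℝ} {F : (Fin N → ℝ) → E} (hF : ContDiffOn ℝ (⊤ : ℕ∞) F (C0 N))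
    {x : Fin N → ℝ} (hx : x ∈ C0 N) (hN : 3 ≤ N) (i : Fin N) :
    pd i (pd i (fun y => mu0 a ω y • F y)) x
      = (mu0 a ω x * (Lf a ω i x ^ 2
            + (-ω - a * (((x i - x (i + 1)) ^ 2)⁻¹ + ((x i - x (i - 1)) ^ 2)⁻¹)))) • F x
        + (2 * (mu0 a ω x * Lf a ω i x)) • pd i F x
        + mu0 a ω x • pd i (pd i F) x := by
  have hev : pd i (fun y => mu0 a ω y • F y)
      =ᶠ[nhds x] fun y => (mu0 a ω y * Lf a ω i y) • F y + mu0 a ω y • pd i F y :=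
    Filter.eventuallyEq_of_mem (isOpen_C0.mem_nhds hx) fun y hy => pd_muF hF hy hN i
  have hgl : DifferentiableAt ℝ (fun y => mu0 a ω y * Lf a ω i y) x :=
    (mu0_diffAt hx hN).mul (Lf_hasFDerivAt hx hN i).differentiableAt
  have hstep : pd i (pd i (fun y => mu0 a ω y • F y)) x
      = pd i (fun y => (mu0 a ω y * Lf a ω i y) • F y + mu0 a ω y • pd i F y) x := by
    show fderiv ℝ (pd i (fun y => mu0 a ω y • F y)) x (Pi.single i 1) = _
    rw [hev.fderiv_eq]
    rfl
  rw [hstep,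
    pd_add (A := fun y => (mu0 a ω y * Lf a ω i y) • F y) (B := fun y => mu0 a ω y • pd i F y)
      (hgl.smul (F_diffAt hF hx)) ((mu0_diffAt hx hN).smul (pd_F_diffAt hF hx i)) i,
    pd_smul hgl (F_diffAt hF hx) i, pd_smul (mu0_diffAt hx hN) (pd_F_diffAt hF hx i) i]
  have hprod : pd i (fun y => mu0 a ω y * Lf a ω i y) x
      = mu0 a ω x * Lf a ω i x * Lf a ω i x
        + mu0 a ω x * (-ω - a * (((x i - x (i + 1)) ^ 2)⁻¹ + ((x i - x (i - 1)) ^ 2)⁻¹)) := by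
    unfold pd
    rw [fderiv_fun_mul (mu0_diffAt hx hN) (Lf_hasFDerivAt hx hN i).differentiableAt,
      ContinuousLinearMap.add_apply, ContinuousLinearMap.smul_apply,
      ContinuousLinearMap.smul_apply]
    have h1 := pd_mu0 (a := a) (ω := ω) hx hN i
    have h2 := pd_Lf (a := a) (ω := ω) hx hN i
    unfold pd at h1 h2
    rw [h1, h2, smul_eq_mul, smul_eq_mul]
    ring
  rw [hprod, pd_mu0 hx hN i]
  rw [show mu0 a ω x * Lf a ω i x * Lf a ω i x
        + mu0 a ω x * (-ω - a * (((x i - x (i + 1)) ^ 2)⁻¹ + ((x i - x (i - 1)) ^ 2)⁻¹))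
      = mu0 a ω x * (Lf a ω i x ^ 2
        + (-ω - a * (((x i - x (i + 1)) ^ 2)⁻¹ + ((x i - x (i - 1)) ^ 2)⁻¹))) by ring]
  rw [show (2 * (mu0 a ω x * Lf a ω i x)) • pd i F x
      = (mu0 a ω x * Lf a ω i x) • pd i F x + (mu0 a ω x * Lf a ω i x) • pd i F x by
    rw [← add_smul]; ring_nf]
  abel

lemma sum_c_sq {x : Fin N → ℝ} :
    ∑ i : Fin N, ((x i - x (i - 1))⁻¹) ^ 2 = ∑ i : Fin N, ((x i - x (i + 1))⁻¹) ^ 2 := by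
  rw [← sum_shift (fun i => ((x i - x (i - 1))⁻¹) ^ 2)]
  refine Finset.sum_congr rfl fun i _ => ?_
  rw [add_sub_cancel_right]
  rw [show (x (i + 1) - x i)⁻¹ = -(x i - x (i + 1))⁻¹ by rw [← inv_neg, neg_sub]]
  ring

lemma sum_xbc {x : Fin N → ℝ} (hx : x ∈ C0 N) (hN : 3 ≤ N) :
    ∑ i : Fin N, x i * ((x i - x (i + 1))⁻¹ + (x i - x (i - 1))⁻¹) = N := by
  have h1 : ∑ i : Fin N, x i * (x i - x (i - 1))⁻¹
      = ∑ i : Fin N, -(x (i + 1) * (x i - x (i + 1))⁻¹) := by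
    rw [← sum_shift (fun i => x i * (x i - x (i - 1))⁻¹)]
    refine Finset.sum_congr rfl fun i _ => ?_
    rw [add_sub_cancel_right]
    rw [show (x (i + 1) - x i)⁻¹ = -(x i - x (i + 1))⁻¹ by rw [← inv_neg, neg_sub]]
    ring
  calc ∑ i : Fin N, x i * ((x i - x (i + 1))⁻¹ + (x i - x (i - 1))⁻¹)
      = ∑ i : Fin N, x i * (x i - x (i + 1))⁻¹ + ∑ i : Fin N, x i * (x i - x (i - 1))⁻¹ := by
        rw [← Finset.sum_add_distrib]; exact Finset.sum_congr rfl fun i _ => by ring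
    _ = ∑ i : Fin N, (x i - x (i + 1)) * (x i - x (i + 1))⁻¹ := by
        rw [h1, ← Finset.sum_add_distrib]; exact Finset.sum_congr rfl fun i _ => by ring
    _ = ∑ _i : Fin N, (1 : ℝ) := Finset.sum_congr rfl fun i _ =>
        mul_inv_cancel₀ (diff_succ_ne hx hN i)
    _ = N := by simp

lemma scalar_id {x : Fin N → ℝ} (hx : x ∈ C0 N) (hN : 3 ≤ N) (a ω : ℝ) :
    ∑ i : Fin N, (Lf a ω i x ^ 2
        + (-ω - a * (((x i - x (i + 1))⁻¹) ^ 2 + ((x i - x (i - 1))⁻¹) ^ 2)))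
    = ω ^ 2 * ∑ i : Fin N, (x i) ^ 2
      + ∑ i : Fin N, 2 * a ^ 2 * ((x i - x (i - 1))⁻¹ * (x i - x (i + 1))⁻¹)
      + 2 * a ^ 2 * ∑ i : Fin N, ((x i - x (i + 1))⁻¹) ^ 2
      - N * ω * (2 * a + 1) - 2 * a * ∑ i : Fin N, ((x i - x (i + 1))⁻¹) ^ 2 := by
  have expand : ∀ i : Fin N, Lf a ω i x ^ 2
      + (-ω - a * (((x i - x (i + 1))⁻¹) ^ 2 + ((x i - x (i - 1))⁻¹) ^ 2))
      = ω ^ 2 * (x i) ^ 2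
        - 2 * a * ω * (x i * ((x i - x (i + 1))⁻¹ + (x i - x (i - 1))⁻¹))
        + a ^ 2 * ((x i - x (i + 1))⁻¹) ^ 2 + a ^ 2 * ((x i - x (i - 1))⁻¹) ^ 2
        + 2 * a ^ 2 * ((x i - x (i - 1))⁻¹ * (x i - x (i + 1))⁻¹)
        - ω - a * ((x i - x (i + 1))⁻¹) ^ 2 - a * ((x i - x (i - 1))⁻¹) ^ 2 := by
    intro i
    unfold Lf
    ring
  rw [Finset.sum_congr rfl fun i _ => expand i]
  simp only [Finset.sum_add_distrib, Finset.sum_sub_distrib, ← Finset.mul_sum,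
    Finset.sum_const, Finset.card_univ, Fintype.card_fin, nsmul_eq_mul]
  rw [sum_c_sq, sum_xbc hx hN]
  ring

lemma grad_id {M : Type*} [AddCommGroup M] [Module ℝ M] {x : Fin N → ℝ} (a ω : ℝ)
    (G : Fin N → M) :
    ∑ i : Fin N, (2 * Lf a ω i x) • G i
    = -((2 * ω) • ∑ i : Fin N, x i • G i)
      + (2 * a) • ∑ i : Fin N, (x i - x (i + 1))⁻¹ • (G i - G (i + 1)) := by
  have step : ∀ i : Fin N, (2 * Lf a ω i x) • G i
      = -((2 * ω) • (x i • G i)) + (2 * a * (x i - x (i + 1))⁻¹) • G i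
        + (2 * a * (x i - x (i - 1))⁻¹) • G i := by
    intro i
    unfold Lf
    rw [← neg_smul, smul_smul, ← add_smul, ← add_smul]
    congr 1
    ring
  rw [Finset.sum_congr rfl fun i _ => step i]
  simp only [Finset.sum_add_distrib]
  have h1 : ∑ i : Fin N, (2 * a * (x i - x (i - 1))⁻¹) • G i
      = ∑ i : Fin N, -((2 * a * (x i - x (i + 1))⁻¹) • G (i + 1)) := by
    rw [← sum_shift (fun i => (2 * a * (x i - x (i - 1))⁻¹) • G i)]
    refine Finset.sum_congr rfl fun i _ => ?_
    rw [add_sub_cancel_right]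
    rw [show (x (i + 1) - x i)⁻¹ = -(x i - x (i + 1))⁻¹ by rw [← inv_neg, neg_sub]]
    rw [← neg_smul]
    congr 1
    ring
  rw [h1]
  rw [show ∑ i : Fin N, -((2 * ω) • (x i • G i)) = -((2 * ω) • ∑ i : Fin N, x i • G i) by
    rw [Finset.smul_sum, ← Finset.sum_neg_distrib]]
  rw [add_assoc]
  congr 1
  rw [← Finset.sum_add_distrib, Finset.smul_sum]
  refine Finset.sum_congr rfl fun i _ => ?_
  rw [smul_smul, smul_sub]
  abel

lemma core {M : Type*} [AddCommGroup M] [Module ℝ M] {x : Fin N → ℝ} (hx : x ∈ C0 N)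
    (hN : 3 ≤ N) (a ω : ℝ) (Fx : M) (G G2 S : Fin N → M) :
    -(∑ i : Fin N, ((Lf a ω i x ^ 2
          + (-ω - a * (((x i - x (i + 1)) ^ 2)⁻¹ + ((x i - x (i - 1)) ^ 2)⁻¹))) • Fx
        + (2 * Lf a ω i x) • G i + G2 i))
    + (ω ^ 2 * (∑ i : Fin N, (x i) ^ 2)
        + ∑ i : Fin N, 2 * a ^ 2 / ((x i - x (i - 1)) * (x i - x (i + 1)))) • Fx
    + ∑ i : Fin N, (2 * a / (x i - x (i + 1)) ^ 2) • (a • Fx - S i)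
    = -((∑ i : Fin N, G2 i)
          + (2 * a) • ∑ i : Fin N, (x i - x (i + 1))⁻¹ • (G i - G (i + 1))
          - (2 * a) • ∑ i : Fin N, ((x i - x (i + 1)) ^ 2)⁻¹ • (Fx - S i))
      + (2 * ω) • (∑ i : Fin N, x i • G i)
      + ((N : ℝ) * ω * (2 * a + 1)) • Fx := by
  simp only [div_eq_mul_inv, mul_inv, ← inv_pow]
  have hsub : ∀ (c : Fin N → ℝ) (v : M) (W : Fin N → M),
      ∑ i : Fin N, c i • (v - W i) = (∑ i : Fin N, c i) • v - ∑ i : Fin N, c i • W i := by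
    intro c v W
    simp only [smul_sub, Finset.sum_sub_distrib, Finset.sum_smul]
  rw [hsub (fun i => 2 * a * ((x i - x (i + 1))⁻¹) ^ 2) (a • Fx) S,
    hsub (fun i => ((x i - x (i + 1))⁻¹) ^ 2) Fx S]
  rw [show ∑ i : Fin N, 2 * a * ((x i - x (i + 1))⁻¹) ^ 2
      = 2 * a * ∑ i : Fin N, ((x i - x (i + 1))⁻¹) ^ 2 from (Finset.mul_sum _ _ _).symm]
  rw [show ∑ i : Fin N, (2 * a * ((x i - x (i + 1))⁻¹) ^ 2) • S i
      = (2 * a) • ∑ i : Fin N, (((x i - x (i + 1))⁻¹) ^ 2) • S i by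
    rw [Finset.smul_sum]; exact Finset.sum_congr rfl fun i _ => mul_smul _ _ _]
  simp only [Finset.sum_add_distrib]
  rw [← Finset.sum_smul, scalar_id hx hN a ω, grad_id a ω G]
  module

theorem stmt_10 (N d : ℕ) [NeZero N] (hN : 3 ≤ N) (hd : 1 ≤ d)
    (a ω : ℝ) (ha : 1 / 2 < a) (hω : 0 < ω)
    (F : (Fin N → ℝ) → Spin N d) (hF : ContDiffOn ℝ (⊤ : ℕ∞) F (C0 N)) :
    ∀ x ∈ C0 N,
      H0 a ω (fun y => mu0 a ω y • F y) x =
        mu0 a ω x •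
          (-(T0star a F x) + (2 * ω) • (∑ i : Fin N, x i • pd i F x)
            + ((N : ℝ) * ω * (2 * a + 1)) • F x) := by
  intro x hx
  have hSop : ∀ (i j : Fin N) (v : Spin N d) (r : ℝ), Sop i j (r • v) = r • Sop i j v :=
    fun i j v r => rfl
  simp only [H0, T0star]
  rw [Finset.sum_congr rfl fun i (_ : i ∈ Finset.univ) =>
    pd2_muF (a := a) (ω := ω) hF hx hN i]
  simp only [hSop]
  have hT1 : ∑ i : Fin N, ((mu0 a ω x * (Lf a ω i x ^ 2
        + (-ω - a * (((x i - x (i + 1)) ^ 2)⁻¹ + ((x i - x (i - 1)) ^ 2)⁻¹)))) • F x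
        + (2 * (mu0 a ω x * Lf a ω i x)) • pd i F x + mu0 a ω x • pd i (pd i F) x)
      = mu0 a ω x • ∑ i : Fin N, ((Lf a ω i x ^ 2
        + (-ω - a * (((x i - x (i + 1)) ^ 2)⁻¹ + ((x i - x (i - 1)) ^ 2)⁻¹))) • F x
        + (2 * Lf a ω i x) • pd i F x + pd i (pd i F) x) := by
    rw [Finset.smul_sum]
    exact Finset.sum_congr rfl fun i _ => by module
  have hT3 : ∑ i : Fin N, (2 * a / (x i - x (i + 1)) ^ 2) •
        (a • (mu0 a ω x • F x) - mu0 a ω x • Sop i (i + 1) (F x))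
      = mu0 a ω x • ∑ i : Fin N, (2 * a / (x i - x (i + 1)) ^ 2) •
        (a • F x - Sop i (i + 1) (F x)) := by
    rw [Finset.smul_sum]
    exact Finset.sum_congr rfl fun i _ => by module
  have hT2 : ∀ V' : ℝ, V' • (mu0 a ω x • F x) = mu0 a ω x • (V' • F x) :=
    fun V' => smul_comm _ _ _
  rw [hT1, hT3, hT2, ← smul_neg, ← smul_add, ← smul_add]
  congr 1
  exact core hx hN a ω (F x) (fun i => pd i F x) (fun i => pd i (pd i F) x)
    (fun i => Sop i (i + 1) (F x))
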